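/- Consider LSVI-UCB++ run on a linear MDP. Fix h ∈ [H] and n ∈ [N], and let k_1 < k_2 < … < k_{K'} be the episodes k with Q_{k,h}(s_h^k,a_h^k) − Q_h^{π^k}(s_h^k,a_h^k) ≥ 2^n Δ_min. Let ι = log(1 + K/(dλ)). Then for any parameters β' ≥ 1 and C ≥ 1: Σ_{i=1}^{K'} min{ β' √( φ(s_h^{k_i},a_h^{k_i})ᵀ Σ_{k_i,h}^{−1} φ(s_h^{k_i},a_h^{k_i}) ), C } ≤ 4 d³H³ C ι + 10 β' d⁴H² ι + 2 β' √( d ι Σ_{i=1}^{K'} (σ_{k_i,h}² + H) ). -/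

import Mathlib

open Finset

/-- Expected value of `f` under the (discrete) transition distribution `P h (· | s, a)`:
`(P_{s,a,h} f) = E_{s' ∼ P_h(·|s,a)} f(s')`. -/
noncomputable def Pexp {S A : Type*} (P : ℕ → S → A → S → ℝ) (h : ℕ) (s : S) (a : A)
    (f : S → ℝ) : ℝ := ∑' s', P h s a s' * f s'

/-- Value function `V_h^π` of a deterministic policy `π` in the episodic MDP `(P, r)` with
horizon `H`, defined by the Bellman equation with `V_{H+1}^π ≡ 0`. -/
noncomputable def Vpol {S A : Type*} (H : ℕ) (P : ℕ → S → A → S → ℝ)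
    (r : ℕ → S → A → ℝ) (π : ℕ → S → A) : ℕ → S → ℝ
  | h => fun s =>
    if _hh : h ≤ H then
      r h s (π h s) + Pexp P h s (π h s) (fun s' => Vpol H P r π (h + 1) s')
    else 0
  termination_by h => H + 1 - h
  decreasing_by omega

/-- Action-value function `Q_h^π` of a deterministic policy `π`. -/
noncomputable def Qpol {S A : Type*} (H : ℕ) (P : ℕ → S → A → S → ℝ)
    (r : ℕ → S → A → ℝ) (π : ℕ → S → A) (h : ℕ) (s : S) (a : A) : ℝ :=
  r h s a + Pexp P h s a (fun s' => Vpol H P r π (h + 1) s')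

/-- Optimal value function `V_h^⋆`, via the Bellman optimality equation with `V_{H+1}^⋆ ≡ 0`. -/
noncomputable def Vstar {S A : Type*} [Fintype A] [Nonempty A] (H : ℕ)
    (P : ℕ → S → A → S → ℝ) (r : ℕ → S → A → ℝ) : ℕ → S → ℝ
  | h => fun s =>
    if _hh : h ≤ H then
      ⨆ a, (r h s a + Pexp P h s a (fun s' => Vstar H P r (h + 1) s'))
    else 0
  termination_by h => H + 1 - h
  decreasing_by omega

/-- Optimal action-value function `Q_h^⋆`. -/
noncomputable def Qstar {S A : Type*} [Fintype A] [Nonempty A] (H : ℕ)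
    (P : ℕ → S → A → S → ℝ) (r : ℕ → S → A → ℝ) (h : ℕ) (s : S) (a : A) : ℝ :=
  r h s a + Pexp P h s a (fun s' => Vstar H P r (h + 1) s')

/-- Suboptimality gap `Δ_h(s,a) = V_h^⋆(s) − Q_h^⋆(s,a)`. -/
noncomputable def gapQ {S A : Type*} [Fintype A] [Nonempty A] (H : ℕ)
    (P : ℕ → S → A → S → ℝ) (r : ℕ → S → A → ℝ) (h : ℕ) (s : S) (a : A) : ℝ :=
  Vstar H P r h s - Qstar H P r h s a
open scoped Matrix
open Finset

/-- `(P, r)` together with features `φ` and measures `θ` forms a linear MDP with horizon `H`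
and feature dimension `d`: transitions are probability kernels, rewards lie in `[0,1]`,
`P_h(s'|s,a) = ⟨φ(s,a), θ_h(s')⟩`, `‖φ(s,a)‖₂ ≤ 1` and `‖θ_h(s')‖₂ ≤ √d`. -/
def IsLinearMDP {S A : Type*} (d H : ℕ) (P : ℕ → S → A → S → ℝ) (r : ℕ → S → A → ℝ)
    (φ : S → A → Fin d → ℝ) (θ : ℕ → S → Fin d → ℝ) : Prop :=
  (∀ h s a s', 0 ≤ P h s a s') ∧ (∀ h s a, HasSum (P h s a) 1) ∧
  (∀ h s a, r h s a ∈ Set.Icc (0 : ℝ) 1) ∧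
  (∀ h ∈ Finset.Icc 1 H, ∀ s a s', P h s a s' = φ s a ⬝ᵥ θ h s') ∧
  (∀ s a, Real.sqrt (∑ j, φ s a j ^ 2) ≤ 1) ∧
  (∀ h ∈ Finset.Icc 1 H, ∀ s', Real.sqrt (∑ j, θ h s' j ^ 2) ≤ Real.sqrt d)

/-- `Δmin` is the minimum gap: the infimum of the positive suboptimality gaps
`Δ_h(s,a) = V_h^⋆(s) − Q_h^⋆(s,a)`, assumed (non-degeneracy) to be positive. -/
noncomputable def IsMinGap {S A : Type*} [Fintype A] [Nonempty A] (H : ℕ)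
    (P : ℕ → S → A → S → ℝ) (r : ℕ → S → A → ℝ) (Δmin : ℝ) : Prop :=
  Δmin = sInf {x : ℝ | 0 < x ∧ ∃ s a, ∃ h ∈ Finset.Icc 1 H, gapQ H P r h s a = x} ∧
  0 < Δmin

/-- The data generated by a run of LSVI-UCB++ (Algorithm 1 of He et al. 2023) over `K`
episodes with horizon `H`, feature dimension `d`, feature map `φ`, regularization `lam` and
confidence radii `β`, `βb` (`= β̄`), `βt` (`= β̃`). -/
structure LSVIRun (S : Type*) (A : Type*) [Fintype A] [Nonempty A]
    (d H K : ℕ) (P : ℕ → S → A → S → ℝ) (r : ℕ → S → A → ℝ)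
    (φ : S → A → Fin d → ℝ) (lam β βb βt : ℝ) where
  /-- states `s_h^k` -/
  st : ℕ → ℕ → S
  /-- actions `a_h^k` -/
  ac : ℕ → ℕ → A
  /-- greedy policies `π^k` -/
  pol : ℕ → ℕ → S → A
  /-- optimistic estimates `Q_{k,h}` -/
  Qup : ℕ → ℕ → S → A → ℝ
  /-- pessimistic estimates `Q̌_{k,h}` -/
  Qlo : ℕ → ℕ → S → A → ℝ
  /-- Gram matrices `Σ_{k,h}` -/
  Sig : ℕ → ℕ → Matrix (Fin d) (Fin d) ℝ
  /-- weighted ridge estimates `ŵ_{k,h}` -/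
  wha : ℕ → ℕ → Fin d → ℝ
  /-- weighted ridge estimates `w̌_{k,h}` -/
  wch : ℕ → ℕ → Fin d → ℝ
  /-- weighted ridge estimates `w̃_{k,h}` (squared value targets) -/
  wti : ℕ → ℕ → Fin d → ℝ
  /-- estimated variances `σ_{k,h}²` -/
  sig2 : ℕ → ℕ → ℝ
  /-- adjusted estimated variances `σ̄_{k,h}²` -/
  sigb2 : ℕ → ℕ → ℝ
  /-- index `k_last` of the last policy-switch episode before episode `k` -/
  klast : ℕ → ℕ

namespace LSVIRun

variable {S A : Type*} [Fintype A] [Nonempty A] {d H K : ℕ}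
  {P : ℕ → S → A → S → ℝ} {r : ℕ → S → A → ℝ} {φ : S → A → Fin d → ℝ}
  {lam β βb βt : ℝ}

/-- optimistic value estimates `V_{k,h}(s) = max_a Q_{k,h}(s,a)` -/
noncomputable def V (R : LSVIRun S A d H K P r φ lam β βb βt) (k h : ℕ) (s : S) : ℝ :=
  ⨆ a, R.Qup k h s a

/-- pessimistic value estimates `V̌_{k,h}(s) = max_a Q̌_{k,h}(s,a)` -/
noncomputable def Vc (R : LSVIRun S A d H K P r φ lam β βb βt) (k h : ℕ) (s : S) : ℝ :=
  ⨆ a, R.Qlo k h s a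

/-- the exploration bonus `‖φ(s,a)‖_{Σ_{k,h}⁻¹} = √(φ(s,a)ᵀ Σ_{k,h}⁻¹ φ(s,a))` -/
noncomputable def bonus (R : LSVIRun S A d H K P r φ lam β βb βt) (k h : ℕ)
    (s : S) (a : A) : ℝ :=
  Real.sqrt (φ s a ⬝ᵥ ((R.Sig k h)⁻¹).mulVec (φ s a))

/-- the feature vector `φ(s_h^k, a_h^k)` -/
def feat (R : LSVIRun S A d H K P r φ lam β βb βt) (k h : ℕ) : Fin d → ℝ :=
  φ (R.st k h) (R.ac k h)

/-- variance-estimation correction term `E_{k,h}` -/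
noncomputable def Ekh (R : LSVIRun S A d H K P r φ lam β βb βt) (k h : ℕ) : ℝ :=
  min (βt * R.bonus k h (R.st k h) (R.ac k h)) ((H : ℝ) ^ 2)
  + min (2 * H * βb * R.bonus k h (R.st k h) (R.ac k h)) ((H : ℝ) ^ 2)

/-- variance-difference correction term `D_{k,h}` -/
noncomputable def Dkh (R : LSVIRun S A d H K P r φ lam β βb βt) (k h : ℕ) : ℝ :=
  min (4 * (d : ℝ) ^ 3 * H ^ 2 * ((R.wha k h - R.wch k h) ⬝ᵥ R.feat k h
      + 2 * βb * R.bonus k h (R.st k h) (R.ac k h))) ((d : ℝ) ^ 3 * H ^ 3)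

/-- truncated plug-in variance estimate
`V̄_{s_h^k,a_h^k,h} V_{k,h+1} = [w̃ᵀφ]_{[0,H²]} − [(ŵᵀφ)²]_{[0,H²]}` -/
noncomputable def varEst (R : LSVIRun S A d H K P r φ lam β βb βt) (k h : ℕ) : ℝ :=
  max 0 (min (R.wti k h ⬝ᵥ R.feat k h) ((H : ℝ) ^ 2))
  - max 0 (min ((R.wha k h ⬝ᵥ R.feat k h) ^ 2) ((H : ℝ) ^ 2))

/-- the policy-switch condition of episode `k`:
`det(Σ_{k,h'}) ≥ 2 det(Σ_{k_last,h'})` for some step `h'` -/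
def updTrigger (R : LSVIRun S A d H K P r φ lam β βb βt) (k : ℕ) : Prop :=
  ∃ h' ∈ Finset.Icc 1 H, 2 * (R.Sig (R.klast k) h').det ≤ (R.Sig k h').det

/-- `R` is a faithful run of LSVI-UCB++: all the defining equations of
Algorithm 1 of He et al. 2023 hold. -/
def ValidRun (R : LSVIRun S A d H K P r φ lam β βb βt) : Prop :=
  -- greedy action selection `a_h^k = argmax_a Q_{k,h}(s_h^k, a)`
  (∀ k h s, R.Qup k h s (R.pol k h s) = ⨆ a, R.Qup k h s a) ∧
  (∀ k h, R.ac k h = R.pol k h (R.st k h)) ∧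
  -- initialization
  (∀ h s a, R.Qup 0 h s a = H) ∧
  (∀ h s a, R.Qlo 0 h s a = 0) ∧
  (∀ k s a, R.Qup k (H + 1) s a = 0) ∧
  (∀ k s a, R.Qlo k (H + 1) s a = 0) ∧
  (∀ h, R.Sig 0 h = lam • (1 : Matrix (Fin d) (Fin d) ℝ)) ∧
  (∀ h, R.Sig 1 h = lam • (1 : Matrix (Fin d) (Fin d) ℝ)) ∧
  R.klast 1 = 0 ∧
  -- `k_last` bookkeeping
  (∀ k ∈ Finset.Icc 1 K,
    (R.updTrigger k → R.klast (k + 1) = k) ∧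
    (¬ R.updTrigger k → R.klast (k + 1) = R.klast k)) ∧
  -- weighted ridge regression solutions
  (∀ k ∈ Finset.Icc 1 K, ∀ h ∈ Finset.Icc 1 H,
    R.wha k h = ((R.Sig k h)⁻¹).mulVec
      (∑ i ∈ Finset.Icc 1 (k - 1),
        ((R.sigb2 i h)⁻¹ * R.V k (h + 1) (R.st i (h + 1))) • φ (R.st i h) (R.ac i h))) ∧
  (∀ k ∈ Finset.Icc 1 K, ∀ h ∈ Finset.Icc 1 H,
    R.wch k h = ((R.Sig k h)⁻¹).mulVec
      (∑ i ∈ Finset.Icc 1 (k - 1),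
        ((R.sigb2 i h)⁻¹ * R.Vc k (h + 1) (R.st i (h + 1))) • φ (R.st i h) (R.ac i h))) ∧
  (∀ k ∈ Finset.Icc 1 K, ∀ h ∈ Finset.Icc 1 H,
    R.wti k h = ((R.Sig k h)⁻¹).mulVec
      (∑ i ∈ Finset.Icc 1 (k - 1),
        ((R.sigb2 i h)⁻¹ * (R.V k (h + 1) (R.st i (h + 1))) ^ 2) • φ (R.st i h) (R.ac i h))) ∧
  -- low-switching optimistic and pessimistic value updates
  (∀ k ∈ Finset.Icc 1 K, ∀ h ∈ Finset.Icc 1 H, ∀ s a,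
    (R.updTrigger k →
      R.Qup k h s a = min (min (r h s a + R.wha k h ⬝ᵥ φ s a + β * R.bonus k h s a)
        (R.Qup (k - 1) h s a)) H) ∧
    (¬ R.updTrigger k → R.Qup k h s a = R.Qup (k - 1) h s a)) ∧
  (∀ k ∈ Finset.Icc 1 K, ∀ h ∈ Finset.Icc 1 H, ∀ s a,
    (R.updTrigger k →
      R.Qlo k h s a = max (max (r h s a + R.wch k h ⬝ᵥ φ s a - βb * R.bonus k h s a)
        (R.Qlo (k - 1) h s a)) 0) ∧
    (¬ R.updTrigger k → R.Qlo k h s a = R.Qlo (k - 1) h s a)) ∧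
  -- estimated variances `σ_{k,h}² = V̄ V_{k,h+1} + E_{k,h} + D_{k,h} + H`
  (∀ k ∈ Finset.Icc 1 K, ∀ h ∈ Finset.Icc 1 H,
    R.sig2 k h = R.varEst k h + R.Ekh k h + R.Dkh k h + H) ∧
  -- adjusted variances `σ̄_{k,h}² = max{σ_{k,h}², H, 2d³H² ‖φ(s_h^k,a_h^k)‖_{Σ_{k,h}⁻¹}}`
  (∀ k ∈ Finset.Icc 1 K, ∀ h ∈ Finset.Icc 1 H,
    R.sigb2 k h = max (R.sig2 k h)
      (max (H : ℝ) (2 * (d : ℝ) ^ 3 * H ^ 2 * R.bonus k h (R.st k h) (R.ac k h)))) ∧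
  -- Gram matrix updates
  (∀ k ∈ Finset.Icc 1 K, ∀ h ∈ Finset.Icc 1 H,
    R.Sig (k + 1) h = R.Sig k h
      + (R.sigb2 k h)⁻¹ • Matrix.vecMulVec (φ (R.st k h) (R.ac k h)) (φ (R.st k h) (R.ac k h)))

/-- the episodes `k ∈ [K]` on which the step-`h` optimism error exceeds `2^n Δmin`:
`Q_{k,h}(s_h^k,a_h^k) − Q_h^{π^k}(s_h^k,a_h^k) ≥ 2^n Δmin` -/
def gapCond (R : LSVIRun S A d H K P r φ lam β βb βt) (Δmin : ℝ) (h n : ℕ) (k : ℕ) : Prop :=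
  k ∈ Finset.Icc 1 K ∧
    2 ^ n * Δmin ≤ R.Qup k h (R.st k h) (R.ac k h)
      - Qpol H P r (R.pol k) h (R.st k h) (R.ac k h)

/-- `k_i(h,n)` : the `i`-th smallest episode (1-indexed in `i`) satisfying `gapCond` -/
noncomputable def epi (R : LSVIRun S A d H K P r φ lam β βb βt) (Δmin : ℝ)
    (h n i : ℕ) : ℕ :=
  Nat.nth (R.gapCond Δmin h n) (i - 1)

/-- `K'(h,n)` : the number of episodes satisfying `gapCond` -/
noncomputable def numEp (R : LSVIRun S A d H K P r φ lam β βb βt) (Δmin : ℝ)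
    (h n : ℕ) : ℕ :=
  {k | R.gapCond Δmin h n k}.ncard

/-- Concentration event `E₁`: the ridge estimates `ŵ, w̃, w̌` predict
`P_{s,a,h}V_{k,h+1}`, `P_{s,a,h}V²_{k,h+1}`, `P_{s,a,h}V̌_{k,h+1}` up to
`β̄, β̃, β̄` times the bonus. -/
def E1 (R : LSVIRun S A d H K P r φ lam β βb βt) : Prop :=
  ∀ k ∈ Finset.Icc 1 K, ∀ h ∈ Finset.Icc 1 H, ∀ (s : S) (a : A),
    |R.wha k h ⬝ᵥ φ s a - Pexp P h s a (R.V k (h + 1))| ≤ βb * R.bonus k h s a ∧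
    |R.wti k h ⬝ᵥ φ s a - Pexp P h s a (fun s' => (R.V k (h + 1) s') ^ 2)|
      ≤ βt * R.bonus k h s a ∧
    |R.wch k h ⬝ᵥ φ s a - Pexp P h s a (R.Vc k (h + 1))| ≤ βb * R.bonus k h s a

/-- Concentration event `E₂`: `ŵ` predicts `P_{s,a,h}V_{k,h+1}` up to `β` times the bonus. -/
def E2 (R : LSVIRun S A d H K P r φ lam β βb βt) : Prop :=
  ∀ k ∈ Finset.Icc 1 K, ∀ h ∈ Finset.Icc 1 H, ∀ (s : S) (a : A),
    |R.wha k h ⬝ᵥ φ s a - Pexp P h s a (R.V k (h + 1))| ≤ β * R.bonus k h s a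

/-- Azuma–Hoeffding event `E₃` for the martingale differences
`(P_{s_{h'}^{k_i},a_{h'}^{k_i},h'} − 𝟙_{s_{h'+1}^{k_i}})(V_{k_i,h'+1} − V^{π^{k_i}}_{h'+1})`. -/
def E3 (R : LSVIRun S A d H K P r φ lam β βb βt) (Δmin δ : ℝ) (N : ℕ) : Prop :=
  ∀ h ∈ Finset.Icc 1 H, ∀ n ∈ Finset.Icc 1 N, ∀ K' ∈ Finset.Icc 1 K,
    K' ≤ R.numEp Δmin h n →
    ∑ i ∈ Finset.Icc 1 K', ∑ h' ∈ Finset.Icc h H,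
      (Pexp P h' (R.st (R.epi Δmin h n i) h') (R.ac (R.epi Δmin h n i) h')
          (fun s' => R.V (R.epi Δmin h n i) (h' + 1) s'
            - Vpol H P r (R.pol (R.epi Δmin h n i)) (h' + 1) s')
        - (R.V (R.epi Δmin h n i) (h' + 1) (R.st (R.epi Δmin h n i) (h' + 1))
            - Vpol H P r (R.pol (R.epi Δmin h n i)) (h' + 1)
                (R.st (R.epi Δmin h n i) (h' + 1))))
      ≤ 2 * Real.sqrt (2 * H ^ 3 * K' * Real.log (H * N * K / δ))

/-- Azuma–Hoeffding event `E₄` for the martingale differences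
`(P_{s_{h'}^{k_i},a_{h'}^{k_i},h'} − 𝟙_{s_{h'+1}^{k_i}})(V_{k_i,h'+1} − V̌_{k_i,h'+1})`. -/
def E4 (R : LSVIRun S A d H K P r φ lam β βb βt) (Δmin δ : ℝ) (N : ℕ) : Prop :=
  ∀ h ∈ Finset.Icc 1 H, ∀ n ∈ Finset.Icc 1 N, ∀ K' ∈ Finset.Icc 1 K,
    K' ≤ R.numEp Δmin h n →
    ∑ i ∈ Finset.Icc 1 K', ∑ h' ∈ Finset.Icc h H,
      (Pexp P h' (R.st (R.epi Δmin h n i) h') (R.ac (R.epi Δmin h n i) h')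
          (fun s' => R.V (R.epi Δmin h n i) (h' + 1) s'
            - R.Vc (R.epi Δmin h n i) (h' + 1) s')
        - (R.V (R.epi Δmin h n i) (h' + 1) (R.st (R.epi Δmin h n i) (h' + 1))
            - R.Vc (R.epi Δmin h n i) (h' + 1) (R.st (R.epi Δmin h n i) (h' + 1))))
      ≤ 2 * Real.sqrt (2 * H ^ 3 * K' * Real.log (H * N * K / δ))

/-- Total-variance event `E₅`:
`∑_{i≤K'} ∑_{h≤H} 𝕍_{s_h^{k_i},a_h^{k_i},h}(V^{π^{k_i}}_{h+1}) ≤ 3H²K' + 3H³ log(HNK/δ)`. -/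
def E5 (R : LSVIRun S A d H K P r φ lam β βb βt) (Δmin δ : ℝ) (N : ℕ) : Prop :=
  ∀ h ∈ Finset.Icc 1 H, ∀ n ∈ Finset.Icc 1 N, ∀ K' ∈ Finset.Icc 1 K,
    K' ≤ R.numEp Δmin h n →
    ∑ i ∈ Finset.Icc 1 K', ∑ h' ∈ Finset.Icc 1 H,
      (Pexp P h' (R.st (R.epi Δmin h n i) h') (R.ac (R.epi Δmin h n i) h')
          (fun s' => (Vpol H P r (R.pol (R.epi Δmin h n i)) (h' + 1) s') ^ 2)
        - (Pexp P h' (R.st (R.epi Δmin h n i) h') (R.ac (R.epi Δmin h n i) h')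
            (fun s' => Vpol H P r (R.pol (R.epi Δmin h n i)) (h' + 1) s')) ^ 2)
      ≤ 3 * H ^ 2 * K' + 3 * H ^ 3 * Real.log (H * N * K / δ)

end LSVIRun

open Matrix Finset

private lemma aux_vmv_mulVec {d : ℕ} (v x : Fin d → ℝ) :
    Matrix.vecMulVec v v *ᵥ x = (v ⬝ᵥ x) • v := by
  ext i
  simp only [Matrix.mulVec, Matrix.vecMulVec_apply, dotProduct, Pi.smul_apply,
    smul_eq_mul]
  rw [Finset.sum_mul]
  exact Finset.sum_congr rfl fun j _ => by ring

private lemma aux_psd {d : ℕ} {c : ℝ} (hc : 0 ≤ c) (v : Fin d → ℝ) :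
    (c • Matrix.vecMulVec v v).PosSemidef := by
  refine Matrix.PosSemidef.of_dotProduct_mulVec_nonneg ?_ ?_
  · show (c • Matrix.vecMulVec v v)ᴴ = _
    rw [Matrix.conjTranspose_smul, star_trivial]
    congr 1
    ext i j
    simp [Matrix.conjTranspose_apply, Matrix.vecMulVec_apply, mul_comm]
  · intro x
    rw [star_trivial, Matrix.smul_mulVec, aux_vmv_mulVec, dotProduct_smul,
      dotProduct_smul, smul_eq_mul, smul_eq_mul, dotProduct_comm x v]
    exact mul_nonneg hc (mul_self_nonneg _)

private lemma aux_pd_smul_one {d : ℕ} {lam : ℝ} (hlam : 0 < lam) :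
    (lam • (1 : Matrix (Fin d) (Fin d) ℝ)).PosDef := by
  refine Matrix.PosDef.of_dotProduct_mulVec_pos ?_ ?_
  · show _ᴴ = _
    rw [Matrix.conjTranspose_smul, Matrix.conjTranspose_one, star_trivial]
  · intro x hx
    rw [star_trivial, Matrix.smul_mulVec, Matrix.one_mulVec, dotProduct_smul,
      smul_eq_mul]
    refine mul_pos hlam ?_
    obtain ⟨i, hi⟩ := Function.ne_iff.mp hx
    simp only [dotProduct]
    refine Finset.sum_pos' (fun j _ => mul_self_nonneg _) ⟨i, Finset.mem_univ i, ?_⟩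
    exact mul_self_pos.mpr hi

private lemma aux_quad_nonneg {d : ℕ} {M : Matrix (Fin d) (Fin d) ℝ} (hM : M.PosDef)
    (v : Fin d → ℝ) : 0 ≤ v ⬝ᵥ M⁻¹.mulVec v := by
  have := hM.inv.posSemidef.dotProduct_mulVec_nonneg v
  rwa [star_trivial] at this

private lemma aux_det_rank_one {d : ℕ} {M : Matrix (Fin d) (Fin d) ℝ} (hM : M.PosDef)
    (c : ℝ) (v : Fin d → ℝ) :
    (M + c • Matrix.vecMulVec v v).det = M.det * (1 + c * (v ⬝ᵥ M⁻¹.mulVec v)) := by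
  have hU : IsUnit M.det := isUnit_iff_ne_zero.2 (ne_of_gt hM.det_pos)
  have h1 : c • Matrix.vecMulVec v v = Matrix.vecMulVec (c • v) v := by
    ext i j
    simp only [Matrix.smul_apply, Matrix.vecMulVec_apply, Pi.smul_apply, smul_eq_mul]
    ring
  have h2 : (Matrix.replicateRow Unit v * M⁻¹ * Matrix.replicateCol Unit (c • v)) default default
      = c * (v ⬝ᵥ M⁻¹.mulVec v) := by
    rw [← Matrix.replicateRow_vecMul, Matrix.replicateRow_mul_replicateCol_apply, dotProduct_smul, smul_eq_mul,
      ← Matrix.dotProduct_mulVec]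
  rw [h1, Matrix.vecMulVec_eq Unit, Matrix.det_add_replicateCol_mul_replicateRow hU]
  congr 1
  rw [Matrix.det_unique, Matrix.add_apply, Matrix.one_apply_eq, h2]

private lemma aux_trace_vmv {d : ℕ} (v : Fin d → ℝ) :
    (Matrix.vecMulVec v v).trace = ∑ j, v j ^ 2 := by
  simp [Matrix.trace, Matrix.diag, Matrix.vecMulVec_apply, sq]

private lemma aux_trace_eq_sum_eig {d : ℕ} {M : Matrix (Fin d) (Fin d) ℝ}
    (hM : M.IsHermitian) : M.trace = ∑ i, hM.eigenvalues i := by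
  have hU : (star (hM.eigenvectorUnitary : Matrix (Fin d) (Fin d) ℝ))
      * (hM.eigenvectorUnitary : Matrix (Fin d) (Fin d) ℝ) = 1 :=
    Matrix.mem_unitaryGroup_iff'.mp hM.eigenvectorUnitary.2
  rw [hM.trace_eq_sum_eigenvalues]
  simp [RCLike.ofReal_real_eq_id]

private lemma aux_det_le_pow {d : ℕ} (hd : 0 < d) {M : Matrix (Fin d) (Fin d) ℝ}
    (hM : M.PosSemidef) {B : ℝ} (hB : M.trace ≤ B) : M.det ≤ (B / d) ^ d := by
  have hdR : (0:ℝ) < d := by exact_mod_cast hd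
  have he : ∀ i, 0 ≤ hM.1.eigenvalues i := hM.eigenvalues_nonneg
  have hdet : M.det = ∏ i, hM.1.eigenvalues i := by
    rw [hM.1.det_eq_prod_eigenvalues]
    exact Finset.prod_congr rfl fun i _ => rfl
  have htr : ∑ i, hM.1.eigenvalues i ≤ B := by
    rw [← aux_trace_eq_sum_eig hM.1]; exact hB
  have hw : ∑ _i : Fin d, (1 / d : ℝ) = 1 := by
    rw [Finset.sum_const]
    simp only [Finset.card_univ, Fintype.card_fin, nsmul_eq_mul]
    field_simp
  have amgm := Real.geom_mean_le_arith_mean_weighted Finset.univ (fun _ => (1 / d : ℝ))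
    hM.1.eigenvalues (fun i _ => by positivity) hw (fun i _ => he i)
  have h2 : ∏ i, hM.1.eigenvalues i ^ (1 / d : ℝ) ≤ B / d := by
    refine le_trans amgm ?_
    have : ∑ i, (1 / d : ℝ) * hM.1.eigenvalues i = (∑ i, hM.1.eigenvalues i) / d := by
      rw [Finset.sum_div]
      exact Finset.sum_congr rfl fun i _ => by ring
    rw [this]
    exact div_le_div_of_nonneg_right htr hdR.le
  have h3 : M.det = (∏ i, hM.1.eigenvalues i ^ (1 / d : ℝ)) ^ d := by
    rw [← Finset.prod_pow, hdet]
    refine Finset.prod_congr rfl fun i _ => ?_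
    rw [← Real.rpow_natCast (hM.1.eigenvalues i ^ (1 / d : ℝ)) d, ← Real.rpow_mul (he i)]
    rw [one_div, inv_mul_cancel₀ (ne_of_gt hdR), Real.rpow_one]
  rw [h3]
  exact pow_le_pow_left₀ (Finset.prod_nonneg fun i _ => Real.rpow_nonneg (he i) _) h2 d

private lemma aux_min_le_log {x : ℝ} (hx : 0 ≤ x) : min 1 x ≤ 2 * Real.log (1 + x) := by
  rcases le_total x 1 with hle | hge
  · rw [min_eq_right hle]
    have h0 : (0:ℝ) < 1 + x := by linarith
    have hinv : (0:ℝ) < (1 + x)⁻¹ := by positivity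
    have h1 := Real.log_le_sub_one_of_pos hinv
    rw [Real.log_inv] at h1
    have h2 : (1 + x) * (1 + x)⁻¹ = 1 := mul_inv_cancel₀ (ne_of_gt h0)
    nlinarith [mul_nonneg hx (sub_nonneg.2 hle), mul_nonneg hx hinv.le]
  · rw [min_eq_left hge]
    have h1 : Real.log 2 ≤ Real.log (1 + x) :=
      Real.log_le_log (by norm_num) (by linarith)
    have h2 := Real.log_two_gt_d9
    linarith

private lemma aux_tel (f : ℕ → ℝ) (K : ℕ) :
    ∑ k ∈ Finset.Icc 1 K, (f (k + 1) - f k) = f (K + 1) - f 1 := by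
  induction K with
  | zero => simp
  | succ n ih =>
    rw [Finset.sum_Icc_succ_top (by omega : 1 ≤ n + 1), ih]
    ring
private lemma elliptic_potential {d : ℕ} (hd : 1 ≤ d) {lam : ℝ} (hlam : 0 < lam) (K : ℕ)
    (v : ℕ → Fin d → ℝ) (c : ℕ → ℝ) (Sg : ℕ → Matrix (Fin d) (Fin d) ℝ)
    (hv : ∀ k ∈ Finset.Icc 1 K, ∑ j, v k j ^ 2 ≤ 1)
    (hc : ∀ k ∈ Finset.Icc 1 K, 0 ≤ c k ∧ c k ≤ 1)
    (hS1 : Sg 1 = lam • (1 : Matrix (Fin d) (Fin d) ℝ))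
    (hrec : ∀ k ∈ Finset.Icc 1 K, Sg (k + 1) = Sg k + c k • Matrix.vecMulVec (v k) (v k)) :
    ∑ k ∈ Finset.Icc 1 K, min 1 (c k * (v k ⬝ᵥ (Sg k)⁻¹.mulVec (v k)))
      ≤ 2 * d * Real.log (1 + K / (d * lam)) := by
  have hdR : (0:ℝ) < d := by exact_mod_cast hd
  have hPD : ∀ k, 1 ≤ k → k ≤ K + 1 → (Sg k).PosDef := by
    intro k hk1
    induction k, hk1 using Nat.le_induction with
    | base => intro _; rw [hS1]; exact aux_pd_smul_one hlam
    | succ k hk ih =>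
      intro hk2
      have hkK : k ∈ Finset.Icc 1 K := Finset.mem_Icc.mpr ⟨hk, by omega⟩
      rw [hrec k hkK]
      exact (ih (by omega)).add_posSemidef (aux_psd (hc k hkK).1 _)
  have htr : ∀ k, 1 ≤ k → k ≤ K + 1 → (Sg k).trace ≤ d * lam + ((k : ℝ) - 1) := by
    intro k hk1
    induction k, hk1 using Nat.le_induction with
    | base =>
      intro _
      rw [hS1, Matrix.trace_smul, Matrix.trace_one]
      simp only [Fintype.card_fin, smul_eq_mul]
      push_cast
      linarith [mul_comm lam (d : ℝ)]
    | succ k hk ih =>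
      intro hk2
      have hkK : k ∈ Finset.Icc 1 K := Finset.mem_Icc.mpr ⟨hk, by omega⟩
      rw [hrec k hkK, Matrix.trace_add, Matrix.trace_smul, aux_trace_vmv, smul_eq_mul]
      have h1 := (hc k hkK).1
      have h2 := (hc k hkK).2
      have h3 := hv k hkK
      have h4 : 0 ≤ ∑ j, v k j ^ 2 := Finset.sum_nonneg fun j _ => sq_nonneg _
      have h5 : c k * (∑ j, v k j ^ 2) ≤ 1 := by nlinarith
      have h6 := ih (by omega)
      push_cast
      push_cast at h6
      linarith
  have hkey : ∀ k ∈ Finset.Icc 1 K,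
      min 1 (c k * (v k ⬝ᵥ (Sg k)⁻¹.mulVec (v k)))
        ≤ 2 * (Real.log ((Sg (k + 1)).det) - Real.log ((Sg k).det)) := by
    intro k hk
    obtain ⟨hk1, hk2⟩ := Finset.mem_Icc.mp hk
    have hPDk := hPD k hk1 (by omega)
    have hq : 0 ≤ v k ⬝ᵥ (Sg k)⁻¹.mulVec (v k) := aux_quad_nonneg hPDk _
    have hx : 0 ≤ c k * (v k ⬝ᵥ (Sg k)⁻¹.mulVec (v k)) := mul_nonneg (hc k hk).1 hq
    have hdet : (Sg (k + 1)).det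
        = (Sg k).det * (1 + c k * (v k ⬝ᵥ (Sg k)⁻¹.mulVec (v k))) := by
      rw [hrec k hk]; exact aux_det_rank_one hPDk _ _
    rw [hdet, Real.log_mul (ne_of_gt hPDk.det_pos) (by linarith)]
    have := aux_min_le_log hx
    linarith
  have hsum : ∑ k ∈ Finset.Icc 1 K, min 1 (c k * (v k ⬝ᵥ (Sg k)⁻¹.mulVec (v k)))
      ≤ 2 * (Real.log ((Sg (K + 1)).det) - Real.log ((Sg 1).det)) := by
    calc ∑ k ∈ Finset.Icc 1 K, min 1 (c k * (v k ⬝ᵥ (Sg k)⁻¹.mulVec (v k)))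
        ≤ ∑ k ∈ Finset.Icc 1 K,
            2 * (Real.log ((Sg (k + 1)).det) - Real.log ((Sg k).det)) :=
          Finset.sum_le_sum hkey
      _ = 2 * ∑ k ∈ Finset.Icc 1 K,
            ((fun j => Real.log ((Sg j).det)) (k + 1) - (fun j => Real.log ((Sg j).det)) k) := by
          rw [Finset.mul_sum]
      _ = 2 * (Real.log ((Sg (K + 1)).det) - Real.log ((Sg 1).det)) := by
          rw [aux_tel (fun j => Real.log ((Sg j).det)) K]
  have hdet1 : (Sg 1).det = lam ^ d := by
    rw [hS1, Matrix.det_smul, Matrix.det_one, Fintype.card_fin, mul_one]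
  have hdetK : (Sg (K + 1)).det ≤ ((d * lam + K) / d) ^ d := by
    refine aux_det_le_pow (by omega) (hPD (K + 1) (by omega) le_rfl).posSemidef ?_
    have := htr (K + 1) (by omega) le_rfl
    push_cast at this
    linarith
  have hpos : (0:ℝ) < (d * lam + K) / d := by positivity
  have hdetKpos := (hPD (K + 1) (by omega) le_rfl).det_pos
  have hlog : Real.log ((Sg (K + 1)).det) ≤ d * Real.log ((d * lam + K) / d) := by
    calc Real.log ((Sg (K + 1)).det) ≤ Real.log (((d * lam + K) / d) ^ d) :=
          Real.log_le_log hdetKpos hdetK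
      _ = d * Real.log ((d * lam + K) / d) := by rw [Real.log_pow]
  have hloglam : Real.log (lam ^ d) = (d : ℝ) * Real.log lam := by rw [Real.log_pow]
  have hfin : Real.log ((d * lam + K) / d) - Real.log lam = Real.log (1 + K / (d * lam)) := by
    rw [← Real.log_div (ne_of_gt hpos) (ne_of_gt hlam)]
    congr 1
    field_simp
  have hgoal : 2 * (d : ℝ) * Real.log (1 + K / (d * lam))
      = 2 * ((d : ℝ) * Real.log ((d * lam + K) / d) - d * Real.log lam) := by
    rw [← hfin]; ring
  rw [hgoal]
  rw [hdet1, hloglam] at hsum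
  linarith


set_option maxHeartbeats 2000000 in
/-- Lemma C.3 / Lemma 5.3, partial sum of bonuses.  Run LSVI-UCB++ on a
linear MDP; fix `h ∈ [H]`, `n ∈ [N]`, and let `k_1 < … < k_{K'}` be the episodes `k` with
`Q_{k,h}(s_h^k,a_h^k) − Q_h^{π^k}(s_h^k,a_h^k) ≥ 2^n Δ_min`.  With `ι = log(1 + K/(dλ))`,
for any `β' ≥ 1` and `C ≥ 1`:
`∑_{i=1}^{K'} min{β'‖φ(s_h^{k_i},a_h^{k_i})‖_{Σ_{k_i,h}⁻¹}, C}
  ≤ 4d³H³Cι + 10β'd⁴H²ι + 2β'√(dι ∑_{i=1}^{K'}(σ_{k_i,h}² + H))`. -/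
theorem stmt_9 {S A : Type*} [Fintype A] [Nonempty A] {d H K : ℕ}
    (hd : 1 ≤ d) (hH : 1 ≤ H) (hK : 1 ≤ K)
    (P : ℕ → S → A → S → ℝ) (r : ℕ → S → A → ℝ)
    (φ : S → A → Fin d → ℝ) (θ : ℕ → S → Fin d → ℝ)
    (hMDP : IsLinearMDP d H P r φ θ)
    (lam β βb βt : ℝ) (hlam : 0 < lam)
    (R : LSVIRun S A d H K P r φ lam β βb βt) (hrun : R.ValidRun)
    (Δmin : ℝ) (hΔ : IsMinGap H P r Δmin)
    (N : ℕ) (hN : N = ⌈(H : ℝ) / Δmin⌉₊)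
    -- the algorithm's estimated variances satisfy `σ_{k,h}² ≥ H`
    (hsig : ∀ k ∈ Finset.Icc 1 K, ∀ h' ∈ Finset.Icc 1 H, (H : ℝ) ≤ R.sig2 k h')
    (h n : ℕ) (hh : h ∈ Finset.Icc 1 H) (hn : n ∈ Finset.Icc 1 N)
    (K' : ℕ) (hK' : K' = R.numEp Δmin h n)
    (ι : ℝ) (hι : ι = Real.log (1 + K / (d * lam)))
    (β' C : ℝ) (hβ' : 1 ≤ β') (hC : 1 ≤ C) :
    ∑ i ∈ Finset.Icc 1 K',
        min (β' * R.bonus (R.epi Δmin h n i) h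
              (R.st (R.epi Δmin h n i) h) (R.ac (R.epi Δmin h n i) h)) C
      ≤ 4 * d ^ 3 * H ^ 3 * C * ι + 10 * β' * d ^ 4 * H ^ 2 * ι
        + 2 * β' * Real.sqrt (d * ι *
            ∑ i ∈ Finset.Icc 1 K', (R.sig2 (R.epi Δmin h n i) h + H)) := by
  
  classical
  obtain ⟨-, -, -, -, -, -, -, hSig1, -, -, -, -, -, -, -, hsig2eq, hsigb2eq, hSrec⟩ := hrun
  obtain ⟨hh1, hh2⟩ := Finset.mem_Icc.mp hh
  have hdR : (1:ℝ) ≤ (d:ℝ) := by exact_mod_cast hd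
  have hHR : (1:ℝ) ≤ (H:ℝ) := by exact_mod_cast hH
  have hdpos : (0:ℝ) < (d:ℝ) := by linarith
  have hHpos : (0:ℝ) < (H:ℝ) := by linarith
  have hβ0 : (0:ℝ) ≤ β' := by linarith
  have hC0 : (0:ℝ) ≤ C := by linarith
  -- numeric helper facts
  have h1H2 : (1:ℝ) ≤ (H:ℝ)^2 := by nlinarith
  have hH_le_H3 : (H:ℝ) ≤ (H:ℝ)^3 := by nlinarith [mul_nonneg hHpos.le (sub_nonneg.2 h1H2)]
  have hH2_le_H3 : (H:ℝ)^2 ≤ (H:ℝ)^3 := by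
    nlinarith [mul_nonneg (sq_nonneg (H:ℝ)) (sub_nonneg.2 hHR)]
  have hd3 : (1:ℝ) ≤ (d:ℝ)^3 := by
    nlinarith [mul_nonneg (sub_nonneg.2 hdR) (sq_nonneg (d:ℝ)), sq_nonneg ((d:ℝ) - 1)]
  have h1d2 : (1:ℝ) ≤ (d:ℝ)^2 := by nlinarith
  have hd_le_d3 : (d:ℝ) ≤ (d:ℝ)^3 := by nlinarith [mul_nonneg hdpos.le (sub_nonneg.2 h1d2)]
  have hH31 : (1:ℝ) ≤ (H:ℝ)^3 := le_trans hHR hH_le_H3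
  have hd3' : (H:ℝ)^3 ≤ (d:ℝ)^3 * (H:ℝ)^3 := by
    nlinarith [mul_nonneg (sub_nonneg.2 hd3) (pow_nonneg hHpos.le 3)]
  have hH2cube : (H:ℝ)^2 ≤ (d:ℝ)^3 * (H:ℝ)^3 := le_trans hH2_le_H3 hd3'
  have hHcube : (H:ℝ) ≤ (d:ℝ)^3 * (H:ℝ)^3 := le_trans hH_le_H3 hd3'
  have hd3H : (1:ℝ) ≤ (d:ℝ)^3 * (H:ℝ) := by
    nlinarith [mul_nonneg (sub_nonneg.2 hd3) hHpos.le]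
  have h2d : 2*(d:ℝ) ≤ 4*(d:ℝ)^3*(H:ℝ)^3 := by
    nlinarith [mul_nonneg (pow_nonneg hdpos.le 3) (sub_nonneg.2 hH31), hd_le_d3]
  -- the episode set
  set p : ℕ → Prop := R.gapCond Δmin h n with hpdef
  have hfin : (setOf p).Finite := by
    refine Set.Finite.subset (Set.finite_Icc 1 K) ?_
    intro k hk
    exact Set.mem_Icc.mpr (Finset.mem_Icc.mp hk.1)
  set g : ℕ → ℕ := R.epi Δmin h n with hgdef
  have hgnth : ∀ i, g i = Nat.nth p (i - 1) := fun i => rfl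
  have hcard : K' = hfin.toFinset.card := by
    rw [hK']
    exact Set.ncard_eq_toFinset_card _ hfin
  have hgmem : ∀ i ∈ Finset.Icc 1 K', p (g i) := by
    intro i hi
    obtain ⟨hi1, hi2⟩ := Finset.mem_Icc.mp hi
    rw [hgnth]
    exact Nat.nth_mem_of_lt_card hfin (lt_of_lt_of_eq (by omega : i - 1 < K') hcard)
  have hgK : ∀ i ∈ Finset.Icc 1 K', g i ∈ Finset.Icc 1 K := fun i hi => (hgmem i hi).1
  have hginj : ∀ x ∈ Finset.Icc 1 K', ∀ y ∈ Finset.Icc 1 K', g x = g y → x = y := by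
    intro x hx y hy hxy
    obtain ⟨hx1, hx2⟩ := Finset.mem_Icc.mp hx
    obtain ⟨hy1, hy2⟩ := Finset.mem_Icc.mp hy
    rw [hgnth, hgnth] at hxy
    have := Nat.nth_injOn hfin (Set.mem_Iio.mpr (lt_of_lt_of_eq (by omega : x - 1 < K') hcard))
      (Set.mem_Iio.mpr (lt_of_lt_of_eq (by omega : y - 1 < K') hcard)) hxy
    omega
  -- abbreviations
  set q : ℕ → ℝ := fun k =>
    φ (R.st k h) (R.ac k h) ⬝ᵥ ((R.Sig k h)⁻¹).mulVec (φ (R.st k h) (R.ac k h)) with hqdef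
  set b : ℕ → ℝ := fun k => R.bonus k h (R.st k h) (R.ac k h) with hbdef
  have hbq : ∀ k, b k = Real.sqrt (q k) := fun k => rfl
  set σ2 : ℕ → ℝ := fun k => R.sig2 k h with hσ2def
  set σb : ℕ → ℝ := fun k => R.sigb2 k h with hσbdef
  set w : ℕ → ℝ := fun k => (σb k)⁻¹ * q k with hwdef
  -- σb facts
  have hσb_eq : ∀ k ∈ Finset.Icc 1 K,
      σb k = max (max (σ2 k) (H:ℝ)) (2 * (d:ℝ)^3 * (H:ℝ)^2 * b k) := by
    intro k hk
    show R.sigb2 k h = max (max (R.sig2 k h) (H:ℝ))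
      (2 * (d:ℝ)^3 * (H:ℝ)^2 * R.bonus k h (R.st k h) (R.ac k h))
    rw [hsigb2eq k hk h hh, ← max_assoc]
  have hσ2H : ∀ k ∈ Finset.Icc 1 K, (H:ℝ) ≤ σ2 k := fun k hk => hsig k hk h hh
  have hb0 : ∀ k, 0 ≤ b k := fun k => Real.sqrt_nonneg _
  have hσbH : ∀ k ∈ Finset.Icc 1 K, (H:ℝ) ≤ σb k := by
    intro k hk
    rw [hσb_eq k hk]
    exact le_trans (le_max_right _ _) (le_max_left _ _)
  have hσb0 : ∀ k ∈ Finset.Icc 1 K, (0:ℝ) < σb k :=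
    fun k hk => lt_of_lt_of_le hHpos (hσbH k hk)
  -- positive definiteness of the Gram matrices
  have hPD : ∀ k, 1 ≤ k → k ≤ K + 1 → (R.Sig k h).PosDef := by
    intro k hk1
    induction k, hk1 using Nat.le_induction with
    | base => intro _; rw [hSig1 h]; exact aux_pd_smul_one hlam
    | succ k hk ih =>
      intro hk2
      have hkK : k ∈ Finset.Icc 1 K := Finset.mem_Icc.mpr ⟨hk, by omega⟩
      rw [hSrec k hkK h hh]
      exact (ih (by omega)).add_posSemidef
        (aux_psd (inv_nonneg.mpr (hσb0 k hkK).le) _)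
  have hq0 : ∀ k ∈ Finset.Icc 1 K, 0 ≤ q k := by
    intro k hk
    obtain ⟨h1, h2⟩ := Finset.mem_Icc.mp hk
    exact aux_quad_nonneg (hPD k h1 (by omega)) _
  have hbsq : ∀ k ∈ Finset.Icc 1 K, b k ^ 2 = q k := by
    intro k hk
    rw [hbq]
    exact Real.sq_sqrt (hq0 k hk)
  have hw0 : ∀ k ∈ Finset.Icc 1 K, 0 ≤ w k :=
    fun k hk => mul_nonneg (inv_nonneg.mpr (hσb0 k hk).le) (hq0 k hk)
  have hmin0 : ∀ k ∈ Finset.Icc 1 K, 0 ≤ min 1 (w k) :=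
    fun k hk => le_min zero_le_one (hw0 k hk)
  -- upper bound on the estimated variances
  have hσ2ub : ∀ k ∈ Finset.Icc 1 K, σ2 k ≤ 5 * (d:ℝ)^3 * (H:ℝ)^3 := by
    intro k hk
    show R.sig2 k h ≤ _
    rw [hsig2eq k hk h hh]
    have h1 : R.varEst k h ≤ (H:ℝ)^2 := by
      unfold LSVIRun.varEst
      have ha : max 0 (min (R.wti k h ⬝ᵥ R.feat k h) ((H:ℝ)^2)) ≤ (H:ℝ)^2 :=
        max_le (by positivity) (min_le_right _ _)
      have hb' : (0:ℝ) ≤ max 0 (min ((R.wha k h ⬝ᵥ R.feat k h)^2) ((H:ℝ)^2)) :=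
        le_max_left _ _
      linarith
    have h2 : R.Ekh k h ≤ 2 * (H:ℝ)^2 := by
      unfold LSVIRun.Ekh
      have ha := min_le_right (βt * R.bonus k h (R.st k h) (R.ac k h)) ((H:ℝ)^2)
      have hb' := min_le_right (2 * (H:ℝ) * βb * R.bonus k h (R.st k h) (R.ac k h)) ((H:ℝ)^2)
      linarith
    have h3 : R.Dkh k h ≤ (d:ℝ)^3 * (H:ℝ)^3 := by
      unfold LSVIRun.Dkh
      exact min_le_right _ _
    linarith [hH2cube, hHcube]
  -- the elliptic potential bound
  have hpot : ∑ k ∈ Finset.Icc 1 K, min 1 (w k) ≤ 2 * (d:ℝ) * ι := by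
    rw [hι]
    exact elliptic_potential hd hlam K (fun k => φ (R.st k h) (R.ac k h))
      (fun k => (R.sigb2 k h)⁻¹) (fun k => R.Sig k h)
      (fun k _ => by
        have h1 := hMDP.2.2.2.2.1 (R.st k h) (R.ac k h)
        have h2 : 0 ≤ ∑ j, φ (R.st k h) (R.ac k h) j ^ 2 :=
          Finset.sum_nonneg fun j _ => sq_nonneg _
        nlinarith [Real.sq_sqrt h2, Real.sqrt_nonneg (∑ j, φ (R.st k h) (R.ac k h) j ^ 2)])
      (fun k hk => ⟨inv_nonneg.mpr (hσb0 k hk).le,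
        inv_le_one_of_one_le₀ (le_trans hHR (hσbH k hk))⟩)
      (hSig1 h)
      (fun k hk => hSrec k hk h hh)
  have hι0 : 0 ≤ ι := by
    rw [hι]
    refine Real.log_nonneg ?_
    have h1 : (0:ℝ) ≤ (K:ℝ)/((d:ℝ)*lam) := by positivity
    linarith
  -- sums of min 1 w over selected indices
  have himg : ∀ s : Finset ℕ, s ⊆ Finset.Icc 1 K' →
      ∑ i ∈ s, min 1 (w (g i)) ≤ 2*(d:ℝ)*ι := by
    intro s hs
    calc ∑ i ∈ s, min 1 (w (g i))
        ≤ ∑ i ∈ Finset.Icc 1 K', min 1 (w (g i)) :=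
          Finset.sum_le_sum_of_subset_of_nonneg hs (fun i hi _ => hmin0 (g i) (hgK i hi))
      _ = ∑ k ∈ (Finset.Icc 1 K').image g, min 1 (w k) :=
          (Finset.sum_image (f := fun k => min 1 (w k)) hginj).symm
      _ ≤ ∑ k ∈ Finset.Icc 1 K, min 1 (w k) := by
          refine Finset.sum_le_sum_of_subset_of_nonneg ?_ (fun k hk _ => hmin0 k hk)
          intro k hk
          obtain ⟨i, hi, rfl⟩ := Finset.mem_image.mp hk
          exact hgK i hi
      _ ≤ 2*(d:ℝ)*ι := hpot
  -- case predicate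
  set PA : ℕ → Prop := fun k => max (σ2 k) (H:ℝ) ≤ 2*(d:ℝ)^3*(H:ℝ)^2 * b k with hPAdef
  have hbposA : ∀ k ∈ Finset.Icc 1 K, PA k → 0 < b k := by
    intro k hk hpa
    rcases lt_or_ge 0 (b k) with hlt | hle
    · exact hlt
    · exfalso
      have h1 : 2*(d:ℝ)^3*(H:ℝ)^2 * b k ≤ 0 :=
        mul_nonpos_of_nonneg_of_nonpos (by positivity) hle
      have h2 : (H:ℝ) ≤ max (σ2 k) (H:ℝ) := le_max_right _ _
      have h3 : max (σ2 k) (H:ℝ) ≤ 2*(d:ℝ)^3*(H:ℝ)^2 * b k := hpa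
      linarith
  have hσbA : ∀ k ∈ Finset.Icc 1 K, PA k → σb k = 2*(d:ℝ)^3*(H:ℝ)^2 * b k := by
    intro k hk hpa
    rw [hσb_eq k hk]
    have hpa' : max (σ2 k) (H:ℝ) ≤ 2*(d:ℝ)^3*(H:ℝ)^2 * b k := hpa
    exact max_eq_right hpa'
  have hwA : ∀ k ∈ Finset.Icc 1 K, PA k → w k = b k / (2*(d:ℝ)^3*(H:ℝ)^2) := by
    intro k hk hpa
    have hbp := hbposA k hk hpa
    have hwk : w k = (σb k)⁻¹ * q k := rfl
    rw [hwk, hσbA k hk hpa, ← hbsq k hk]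
    have hne1 : (2*(d:ℝ)^3*(H:ℝ)^2) ≠ 0 := by positivity
    have hne2 : b k ≠ 0 := ne_of_gt hbp
    field_simp
  have hσbB : ∀ k ∈ Finset.Icc 1 K, ¬ PA k → σb k = σ2 k := by
    intro k hk hpa
    have hpa' : ¬ (max (σ2 k) (H:ℝ) ≤ 2*(d:ℝ)^3*(H:ℝ)^2 * b k) := hpa
    rw [hσb_eq k hk, max_eq_left (not_le.mp hpa').le]
    exact max_eq_left (hσ2H k hk)
  have hwB_le : ∀ k ∈ Finset.Icc 1 K, ¬ PA k → w k ≤ 5/4 := by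
    intro k hk hpa
    have h1 : 2*(d:ℝ)^3*(H:ℝ)^2 * b k ≤ σ2 k := by
      have hpa' : ¬ (max (σ2 k) (H:ℝ) ≤ 2*(d:ℝ)^3*(H:ℝ)^2 * b k) := hpa
      have h2 := (not_le.mp hpa').le
      have h3 : max (σ2 k) (H:ℝ) = σ2 k := max_eq_left (hσ2H k hk)
      exact le_trans h2 (le_of_eq h3)
    have hσ2pos : (0:ℝ) < σ2 k := lt_of_lt_of_le hHpos (hσ2H k hk)
    have hub := hσ2ub k hk
    have hbnn := hb0 k
    have hL0 : (0:ℝ) ≤ 2*(d:ℝ)^3*(H:ℝ)^2 * b k :=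
      mul_nonneg (by positivity) hbnn
    have h2 : (2*(d:ℝ)^3*(H:ℝ)^2 * b k)^2 ≤ (σ2 k)^2 := pow_le_pow_left₀ hL0 h1 2
    have h3 : (σ2 k)^2 ≤ σ2 k * (5*(d:ℝ)^3*(H:ℝ)^3) := by
      nlinarith [mul_le_mul_of_nonneg_left hub hσ2pos.le]
    have h4 : (4*(d:ℝ)^3*(H:ℝ)*(b k)^2) * ((d:ℝ)^3*(H:ℝ)^3)
        ≤ (5*σ2 k) * ((d:ℝ)^3*(H:ℝ)^3) := by nlinarith [h2, h3]
    have h5 : 4*(d:ℝ)^3*(H:ℝ)*(b k)^2 ≤ 5*σ2 k :=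
      le_of_mul_le_mul_right h4 (by positivity)
    have h6 : (b k)^2 ≤ (5/4) * σ2 k := by
      nlinarith [mul_nonneg (sub_nonneg.2 hd3H) (sq_nonneg (b k))]
    have hwk : w k = (σ2 k)⁻¹ * (b k)^2 := by
      show (σb k)⁻¹ * q k = _
      rw [hσbB k hk hpa, ← hbsq k hk]
    rw [hwk]
    calc (σ2 k)⁻¹ * (b k)^2 ≤ (σ2 k)⁻¹ * ((5/4) * σ2 k) := by
          exact mul_le_mul_of_nonneg_left h6 (inv_nonneg.mpr hσ2pos.le)
      _ = 5/4 := by field_simp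
  -- the three pieces
  have t1 := Finset.sum_filter_add_sum_filter_not
    ((Finset.Icc 1 K').filter (fun i => PA (g i)))
    (fun i => 2*(d:ℝ)^3*(H:ℝ)^2 ≤ b (g i)) (fun i => min (β' * b (g i)) C)
  have t2 := Finset.sum_filter_add_sum_filter_not (Finset.Icc 1 K')
    (fun i => PA (g i)) (fun i => min (β' * b (g i)) C)
  have hsub1 : ((Finset.Icc 1 K').filter (fun i => PA (g i))).filter
      (fun i => 2*(d:ℝ)^3*(H:ℝ)^2 ≤ b (g i)) ⊆ Finset.Icc 1 K' :=
    (Finset.filter_subset _ _).trans (Finset.filter_subset _ _)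
  have hsub2 : ((Finset.Icc 1 K').filter (fun i => PA (g i))).filter
      (fun i => ¬ (2*(d:ℝ)^3*(H:ℝ)^2 ≤ b (g i))) ⊆ Finset.Icc 1 K' :=
    (Finset.filter_subset _ _).trans (Finset.filter_subset _ _)
  have hsub3 : (Finset.Icc 1 K').filter (fun i => ¬ PA (g i)) ⊆ Finset.Icc 1 K' :=
    Finset.filter_subset _ _
  -- Bound 1
  have hB1 : ∑ i ∈ ((Finset.Icc 1 K').filter (fun i => PA (g i))).filter
      (fun i => 2*(d:ℝ)^3*(H:ℝ)^2 ≤ b (g i)), min (β' * b (g i)) C ≤ C * (2*(d:ℝ)*ι) := by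
    calc ∑ i ∈ ((Finset.Icc 1 K').filter (fun i => PA (g i))).filter
          (fun i => 2*(d:ℝ)^3*(H:ℝ)^2 ≤ b (g i)), min (β' * b (g i)) C
        ≤ ∑ i ∈ ((Finset.Icc 1 K').filter (fun i => PA (g i))).filter
          (fun i => 2*(d:ℝ)^3*(H:ℝ)^2 ≤ b (g i)), C * min 1 (w (g i)) := by
          refine Finset.sum_le_sum ?_
          intro i hi
          have hbig := (Finset.mem_filter.mp hi).2
          have hi' := Finset.mem_of_mem_filter i hi
          have hpa := (Finset.mem_filter.mp hi').2
          have hiT := Finset.mem_of_mem_filter i hi'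
          have hk := hgK i hiT
          have hw1 : (1:ℝ) ≤ w (g i) := by
            rw [hwA (g i) hk hpa, le_div_iff₀ (by positivity)]
            linarith
          rw [min_eq_left hw1, mul_one]
          exact min_le_right _ _
      _ = C * ∑ i ∈ ((Finset.Icc 1 K').filter (fun i => PA (g i))).filter
          (fun i => 2*(d:ℝ)^3*(H:ℝ)^2 ≤ b (g i)), min 1 (w (g i)) := by
          rw [Finset.mul_sum]
      _ ≤ C * (2*(d:ℝ)*ι) := mul_le_mul_of_nonneg_left (himg _ hsub1) hC0
  have hB1' : C * (2*(d:ℝ)*ι) ≤ 4*(d:ℝ)^3*(H:ℝ)^3*C*ι := by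
    nlinarith [mul_nonneg (sub_nonneg.2 h2d) (mul_nonneg hC0 hι0)]
  -- Bound 2
  have hB2 : ∑ i ∈ ((Finset.Icc 1 K').filter (fun i => PA (g i))).filter
      (fun i => ¬ (2*(d:ℝ)^3*(H:ℝ)^2 ≤ b (g i))), min (β' * b (g i)) C
      ≤ (β' * (2*(d:ℝ)^3*(H:ℝ)^2)) * (2*(d:ℝ)*ι) := by
    calc ∑ i ∈ ((Finset.Icc 1 K').filter (fun i => PA (g i))).filter
          (fun i => ¬ (2*(d:ℝ)^3*(H:ℝ)^2 ≤ b (g i))), min (β' * b (g i)) C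
        ≤ ∑ i ∈ ((Finset.Icc 1 K').filter (fun i => PA (g i))).filter
          (fun i => ¬ (2*(d:ℝ)^3*(H:ℝ)^2 ≤ b (g i))),
            (β' * (2*(d:ℝ)^3*(H:ℝ)^2)) * min 1 (w (g i)) := by
          refine Finset.sum_le_sum ?_
          intro i hi
          have hnbig := (Finset.mem_filter.mp hi).2
          have hi' := Finset.mem_of_mem_filter i hi
          have hpa := (Finset.mem_filter.mp hi').2
          have hiT := Finset.mem_of_mem_filter i hi'
          have hk := hgK i hiT
          have hwlt : w (g i) ≤ 1 := by
            rw [hwA (g i) hk hpa, div_le_one (by positivity)]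
            linarith [not_le.mp hnbig]
          rw [min_eq_right hwlt]
          have he : (β' * (2*(d:ℝ)^3*(H:ℝ)^2)) * w (g i) = β' * b (g i) := by
            rw [hwA (g i) hk hpa]
            field_simp
          rw [he]
          exact min_le_left _ _
      _ = (β' * (2*(d:ℝ)^3*(H:ℝ)^2)) * ∑ i ∈ ((Finset.Icc 1 K').filter
          (fun i => PA (g i))).filter (fun i => ¬ (2*(d:ℝ)^3*(H:ℝ)^2 ≤ b (g i))),
            min 1 (w (g i)) := by rw [Finset.mul_sum]
      _ ≤ (β' * (2*(d:ℝ)^3*(H:ℝ)^2)) * (2*(d:ℝ)*ι) :=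
          mul_le_mul_of_nonneg_left (himg _ hsub2) (by positivity)
  have hB2' : (β' * (2*(d:ℝ)^3*(H:ℝ)^2)) * (2*(d:ℝ)*ι) ≤ 10*β'*(d:ℝ)^4*(H:ℝ)^2*ι := by
    nlinarith [mul_nonneg (mul_nonneg hβ0 (by positivity : (0:ℝ) ≤ (d:ℝ)^4*(H:ℝ)^2)) hι0]
  -- Bound 3
  have hA0 : 0 ≤ ∑ i ∈ Finset.Icc 1 K', (σ2 (g i) + (H:ℝ)) := by
    refine Finset.sum_nonneg fun i hi => ?_
    have := hσ2H (g i) (hgK i hi)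
    linarith
  have hsum3w : ∑ i ∈ (Finset.Icc 1 K').filter (fun i => ¬ PA (g i)), w (g i)
      ≤ (5/2)*((d:ℝ)*ι) := by
    calc ∑ i ∈ (Finset.Icc 1 K').filter (fun i => ¬ PA (g i)), w (g i)
        ≤ ∑ i ∈ (Finset.Icc 1 K').filter (fun i => ¬ PA (g i)), (5/4) * min 1 (w (g i)) := by
          refine Finset.sum_le_sum ?_
          intro i hi
          have hnpa := (Finset.mem_filter.mp hi).2
          have hk := hgK i (Finset.mem_of_mem_filter i hi)
          have h54 := hwB_le (g i) hk hnpa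
          have h0 := hw0 (g i) hk
          rcases le_total (w (g i)) 1 with hle | hge
          · rw [min_eq_right hle]; linarith
          · rw [min_eq_left hge]; linarith
      _ = (5/4) * ∑ i ∈ (Finset.Icc 1 K').filter (fun i => ¬ PA (g i)), min 1 (w (g i)) := by
          rw [Finset.mul_sum]
      _ ≤ (5/4) * (2*(d:ℝ)*ι) := mul_le_mul_of_nonneg_left (himg _ hsub3) (by norm_num)
      _ = (5/2)*((d:ℝ)*ι) := by ring
  have hsumσ : ∑ i ∈ (Finset.Icc 1 K').filter (fun i => ¬ PA (g i)), σ2 (g i)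
      ≤ ∑ i ∈ Finset.Icc 1 K', (σ2 (g i) + (H:ℝ)) := by
    calc ∑ i ∈ (Finset.Icc 1 K').filter (fun i => ¬ PA (g i)), σ2 (g i)
        ≤ ∑ i ∈ (Finset.Icc 1 K').filter (fun i => ¬ PA (g i)), (σ2 (g i) + (H:ℝ)) := by
          refine Finset.sum_le_sum fun i hi => ?_
          linarith
      _ ≤ ∑ i ∈ Finset.Icc 1 K', (σ2 (g i) + (H:ℝ)) := by
          refine Finset.sum_le_sum_of_subset_of_nonneg hsub3 fun i hi _ => ?_
          have := hσ2H (g i) (hgK i hi)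
          linarith
  have hw30 : 0 ≤ ∑ i ∈ (Finset.Icc 1 K').filter (fun i => ¬ PA (g i)), w (g i) :=
    Finset.sum_nonneg fun i hi => hw0 (g i) (hgK i (Finset.mem_of_mem_filter i hi))
  have hB3 : ∑ i ∈ (Finset.Icc 1 K').filter (fun i => ¬ PA (g i)), min (β' * b (g i)) C
      ≤ 2*β'*Real.sqrt ((d:ℝ)*ι* ∑ i ∈ Finset.Icc 1 K', (σ2 (g i) + (H:ℝ))) := by
    have hterm : ∀ i ∈ (Finset.Icc 1 K').filter (fun i => ¬ PA (g i)),
        min (β' * b (g i)) C ≤ β' * (Real.sqrt (σ2 (g i)) * Real.sqrt (w (g i))) := by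
      intro i hi
      have hnpa := (Finset.mem_filter.mp hi).2
      have hk := hgK i (Finset.mem_of_mem_filter i hi)
      have hσ2pos : (0:ℝ) < σ2 (g i) := lt_of_lt_of_le hHpos (hσ2H _ hk)
      have hne : σ2 (g i) ≠ 0 := ne_of_gt hσ2pos
      have hwdef2 : w (g i) = (σ2 (g i))⁻¹ * q (g i) := by
        show (σb (g i))⁻¹ * q (g i) = _
        rw [hσbB (g i) hk hnpa]
      have hq_eq : q (g i) = σ2 (g i) * w (g i) := by
        rw [hwdef2, ← mul_assoc, mul_inv_cancel₀ hne, one_mul]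
      have hbw : b (g i) = Real.sqrt (σ2 (g i)) * Real.sqrt (w (g i)) := by
        rw [hbq, hq_eq, Real.sqrt_mul hσ2pos.le]
      calc min (β' * b (g i)) C ≤ β' * b (g i) := min_le_left _ _
        _ = β' * (Real.sqrt (σ2 (g i)) * Real.sqrt (w (g i))) := by rw [hbw]
    calc ∑ i ∈ (Finset.Icc 1 K').filter (fun i => ¬ PA (g i)), min (β' * b (g i)) C
        ≤ ∑ i ∈ (Finset.Icc 1 K').filter (fun i => ¬ PA (g i)),
            β' * (Real.sqrt (σ2 (g i)) * Real.sqrt (w (g i))) := Finset.sum_le_sum hterm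
      _ = β' * ∑ i ∈ (Finset.Icc 1 K').filter (fun i => ¬ PA (g i)),
            Real.sqrt (σ2 (g i)) * Real.sqrt (w (g i)) := by rw [Finset.mul_sum]
      _ ≤ β' * (2 * Real.sqrt ((d:ℝ)*ι* ∑ i ∈ Finset.Icc 1 K', (σ2 (g i) + (H:ℝ)))) := by
          refine mul_le_mul_of_nonneg_left ?_ hβ0
          have hcs := Finset.sum_mul_sq_le_sq_mul_sq
            ((Finset.Icc 1 K').filter (fun i => ¬ PA (g i)))
            (fun i => Real.sqrt (σ2 (g i))) (fun i => Real.sqrt (w (g i)))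
          have hsq1 : ∀ i ∈ (Finset.Icc 1 K').filter (fun i => ¬ PA (g i)),
              Real.sqrt (σ2 (g i)) ^ 2 = σ2 (g i) := fun i hi =>
            Real.sq_sqrt (le_trans hHpos.le (hσ2H (g i) (hgK i (Finset.mem_of_mem_filter i hi))))
          have hsq2 : ∀ i ∈ (Finset.Icc 1 K').filter (fun i => ¬ PA (g i)),
              Real.sqrt (w (g i)) ^ 2 = w (g i) := fun i hi =>
            Real.sq_sqrt (hw0 (g i) (hgK i (Finset.mem_of_mem_filter i hi)))
          rw [Finset.sum_congr rfl hsq1, Finset.sum_congr rfl hsq2] at hcs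
          have hS0 : 0 ≤ ∑ i ∈ (Finset.Icc 1 K').filter (fun i => ¬ PA (g i)),
              Real.sqrt (σ2 (g i)) * Real.sqrt (w (g i)) :=
            Finset.sum_nonneg fun i _ => mul_nonneg (Real.sqrt_nonneg _) (Real.sqrt_nonneg _)
          have hdι0 : (0:ℝ) ≤ (d:ℝ)*ι := mul_nonneg hdpos.le hι0
          have h1 : (∑ i ∈ (Finset.Icc 1 K').filter (fun i => ¬ PA (g i)),
              Real.sqrt (σ2 (g i)) * Real.sqrt (w (g i)))^2
              ≤ (∑ i ∈ Finset.Icc 1 K', (σ2 (g i) + (H:ℝ))) * ((5/2)*((d:ℝ)*ι)) :=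
            le_trans hcs (mul_le_mul hsumσ hsum3w hw30 hA0)
          have h2 : (∑ i ∈ (Finset.Icc 1 K').filter (fun i => ¬ PA (g i)),
              Real.sqrt (σ2 (g i)) * Real.sqrt (w (g i)))^2
              ≤ 4 * ((d:ℝ)*ι* ∑ i ∈ Finset.Icc 1 K', (σ2 (g i) + (H:ℝ))) := by
            nlinarith [h1, mul_nonneg hdι0 hA0]
          calc ∑ i ∈ (Finset.Icc 1 K').filter (fun i => ¬ PA (g i)),
              Real.sqrt (σ2 (g i)) * Real.sqrt (w (g i))
              = Real.sqrt ((∑ i ∈ (Finset.Icc 1 K').filter (fun i => ¬ PA (g i)),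
                  Real.sqrt (σ2 (g i)) * Real.sqrt (w (g i)))^2) := (Real.sqrt_sq hS0).symm
            _ ≤ Real.sqrt (4 * ((d:ℝ)*ι* ∑ i ∈ Finset.Icc 1 K', (σ2 (g i) + (H:ℝ)))) :=
                Real.sqrt_le_sqrt h2
            _ = 2 * Real.sqrt ((d:ℝ)*ι* ∑ i ∈ Finset.Icc 1 K', (σ2 (g i) + (H:ℝ))) := by
                rw [show (4:ℝ) * ((d:ℝ)*ι* ∑ i ∈ Finset.Icc 1 K', (σ2 (g i) + (H:ℝ)))
                    = (2:ℝ)^2 * ((d:ℝ)*ι* ∑ i ∈ Finset.Icc 1 K', (σ2 (g i) + (H:ℝ))) by ring,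
                  Real.sqrt_mul (by norm_num : (0:ℝ) ≤ (2:ℝ)^2),
                  Real.sqrt_sq (by norm_num : (0:ℝ) ≤ (2:ℝ))]
      _ = 2*β'*Real.sqrt ((d:ℝ)*ι* ∑ i ∈ Finset.Icc 1 K', (σ2 (g i) + (H:ℝ))) := by ring
  -- conclusion
  have key : ∑ i ∈ Finset.Icc 1 K', min (β' * b (g i)) C
      ≤ 4*(d:ℝ)^3*(H:ℝ)^3*C*ι + 10*β'*(d:ℝ)^4*(H:ℝ)^2*ι
        + 2*β'*Real.sqrt ((d:ℝ)*ι* ∑ i ∈ Finset.Icc 1 K', (σ2 (g i) + (H:ℝ))) := by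
    linarith [t1, t2, hB1, hB1', hB2, hB2', hB3]
  exact key
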